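/- arXiv:2202.04272 — 3 statements merged into one kernel-verified Lean document; each statement's English description precedes it below -/
import Mathlib

section
/- Let A be a bounded linear operator on H. Then for every α ∈ [0,1], η(A)⁴ ≤ ‖ |A|^{4α} + |A|⁴ ‖_ber · ‖ |A*|^{4(1−α)} + |A|⁴ ‖_ber; consequently η(A)⁴ ≤ min_{α∈[0,1]} ‖ |A|^{4α} + |A|⁴ ‖_ber · ‖ |A*|^{4(1−α)} + |A|⁴ ‖_ber. -/
open scoped InnerProductSpace
open ContinuousLinearMap

variable {H : Type*} [NormedAddCommGroup H] [InnerProductSpace ℂ H] [CompleteSpace H]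
variable {Ω : Type*} [Nonempty Ω]

/-- Berezin number: `ber(T) = sup_{λ∈Ω} |⟨T k̂_λ, k̂_λ⟩|`. -/
noncomputable def ber (k : Ω → H) (T : H →L[ℂ] H) : ℝ :=
  ⨆ lam : Ω, ‖⟪T (k lam), k lam⟫_ℂ‖

/-- Berezin norm: `‖T‖_ber = sup_{λ,μ∈Ω} |⟨T k̂_λ, k̂_μ⟩|`. -/
noncomputable def bernorm (k : Ω → H) (T : H →L[ℂ] H) : ℝ :=
  ⨆ p : Ω × Ω, ‖⟪T (k p.1), k p.2⟫_ℂ‖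

/-- Least Berezin number: `c(T) = inf_{λ∈Ω} |⟨T k̂_λ, k̂_λ⟩|`. -/
noncomputable def lber (k : Ω → H) (T : H →L[ℂ] H) : ℝ :=
  ⨅ lam : Ω, ‖⟪T (k lam), k lam⟫_ℂ‖

/-- Davis-Wielandt-Berezin radius: `η(T) = sup_{λ∈Ω} √(|⟨T k̂_λ, k̂_λ⟩|² + ‖T k̂_λ‖⁴)`. -/
noncomputable def eta (k : Ω → H) (T : H →L[ℂ] H) : ℝ :=
  ⨆ lam : Ω, Real.sqrt (‖⟪T (k lam), k lam⟫_ℂ‖ ^ 2 + ‖T (k lam)‖ ^ 4)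

/-- The modulus `|A| = (A*A)^{1/2}`. -/
noncomputable def absop (A : H →L[ℂ] H) : H →L[ℂ] H := CFC.sqrt (adjoint A * A)


/-
The heart of the proof is Kato's mixed Schwarz inequality
`|⟪A x, y⟫|² ≤ ⟪(A*A)^α x, x⟫ ⟪(AA*)^(1-α) y, y⟫`. Instead of a polar decomposition we use the
invertible regularisations `A*A + ε` and `AA* + ε`: `A` intertwines them, hence all their powers, so
`A = (AA* + ε)^((1-α)/2) A (A*A + ε)^((α-1)/2)`; Cauchy–Schwarz gives the inequality for these
regularisations, and we let `ε → 0`.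

For a unit vector `x` put `a = ⟪|A|^(2α) x, x⟫`, `b = ⟪|A*|^(2(1-α)) x, x⟫` and
`c = ⟪|A|² x, x⟫ = ‖A x‖²`. Then `|⟪A x, x⟫|² + ‖A x‖⁴ ≤ ab + c²`, and
`(ab + c²)² ≤ (a² + c²)(b² + c²)`; finally `⟪T x, x⟫² ≤ ⟪T² x, x⟫` for self-adjoint `T` bounds each
factor by a Berezin symbol, hence by a Berezin norm.
-/

open Filter Topology RCLike Polynomial

theorem SemiconjBy.aeval {R A : Type*} [CommSemiring R] [Semiring A] [Algebra R A] {x a b : A}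
    (h : SemiconjBy x a b) (q : R[X]) : SemiconjBy x (aeval a q) (aeval b q) := by
  induction q using Polynomial.induction_on with
  | C r => simpa [SemiconjBy] using (Algebra.commutes r x).symm
  | add p q hp hq => simpa using hp.add_right hq
  | monomial n r _ => simpa [Algebra.smul_def] using (h.pow_right (n + 1)).smul_right r

/-- By Weierstrass approximation on an interval containing both spectra, it suffices to
intertwine polynomials in `a` and `b`. -/
theorem SemiconjBy.cfc_real {A : Type*} [CStarAlgebra A] {x a b : A} (h : SemiconjBy x a b)
    (ha : IsSelfAdjoint a) (hb : IsSelfAdjoint b) {f : ℝ → ℝ} (hf : Continuous f) :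
    SemiconjBy x (cfc f a) (cfc f b) := by
  obtain ⟨r, hr⟩ := ((ContinuousFunctionalCalculus.isCompact_spectrum (R := ℝ) a).union
    (ContinuousFunctionalCalculus.isCompact_spectrum (R := ℝ) b)).isBounded.subset_closedBall 0
  rw [Real.closedBall_eq_Icc, zero_sub, zero_add, Set.union_subset_iff] at hr
  rw [SemiconjBy, ← sub_eq_zero, ← norm_le_zero_iff]
  refine le_of_forall_pos_le_add fun ε hε => ?_
  set δ := ε / (2 * ‖x‖ + 1)
  have hδ : 0 < δ := by positivity
  obtain ⟨q, hq⟩ := exists_polynomial_near_of_continuousOn (-r) r f hf.continuousOn δ hδ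
  have approx : ∀ c : A, IsSelfAdjoint c → spectrum ℝ c ⊆ Set.Icc (-r) r →
      ‖cfc f c - Polynomial.aeval c q‖ ≤ δ := by
    intro c hc hsub
    rw [← cfc_polynomial q c, ← cfc_sub f (q.eval ·) c]
    exact norm_cfc_le hδ.le fun t ht => by
      rw [Real.norm_eq_abs, abs_sub_comm]
      exact (hq t (hsub ht)).le
  calc ‖x * cfc f a - cfc f b * x‖
      = ‖x * (cfc f a - Polynomial.aeval a q) - (cfc f b - Polynomial.aeval b q) * x‖ := by
        rw [mul_sub, sub_mul, (h.aeval q).eq]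
        abel_nf
    _ ≤ ‖x‖ * δ + δ * ‖x‖ :=
        norm_sub_le_of_le (norm_mul_le_of_le le_rfl (approx a ha hr.1))
          (norm_mul_le_of_le (approx b hb hr.2) le_rfl)
    _ ≤ 0 + ε := by
        have hδε : δ * (2 * ‖x‖ + 1) = ε := div_mul_cancel₀ _ (by positivity)
        nlinarith

theorem SemiconjBy.rpow {A : Type*} [CStarAlgebra A] [PartialOrder A] [StarOrderedRing A]
    {x a b : A} (h : SemiconjBy x a b) (ha : 0 ≤ a) (hb : 0 ≤ b) {s : ℝ} (hs : 0 ≤ s) :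
    SemiconjBy x (a ^ s) (b ^ s) := by
  rw [CFC.rpow_eq_cfc_real ha, CFC.rpow_eq_cfc_real hb]
  exact h.cfc_real ha.isSelfAdjoint hb.isSelfAdjoint (Real.continuous_rpow_const hs)

theorem eq_rpow_mul_mul_rpow_neg {A : Type*} [CStarAlgebra A] [PartialOrder A]
    [StarOrderedRing A] (a : A) {ε s : ℝ} (hε : 0 < ε) (hs : 0 ≤ s) :
    a = (a * star a + algebraMap ℝ A ε) ^ s * a * (star a * a + algebraMap ℝ A ε) ^ (-s) := by
  have hpos : ∀ b : A, 0 ≤ b → IsStrictlyPositive (b + algebraMap ℝ A ε) := fun b hb =>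
    (isStrictlyPositive_algebraMap hε).nonneg_add hb
  have hsemi : SemiconjBy a (star a * a + algebraMap ℝ A ε) (a * star a + algebraMap ℝ A ε) := by
    simp only [SemiconjBy, mul_add, add_mul, mul_assoc, Algebra.commutes]
  rw [← (hsemi.rpow (hpos _ (star_mul_self_nonneg a)).nonneg
      (hpos _ (mul_star_self_nonneg a)).nonneg hs).eq, mul_assoc,
    CFC.rpow_mul_rpow_neg s (hpos _ (star_mul_self_nonneg a)), mul_one]

theorem tendsto_rpow_add_algebraMap {A : Type*} [CStarAlgebra A] [PartialOrder A]
    [StarOrderedRing A] {a : A} (ha : 0 ≤ a) {p : ℝ} (hp : 0 ≤ p) :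
    Tendsto (fun ε : ℝ => (a + algebraMap ℝ A ε) ^ p) (𝓝[>] 0) (𝓝 (a ^ p)) := by
  have hcont : Continuous fun ε : ℝ => cfc (· ^ p : ℝ → ℝ) (a + algebraMap ℝ A ε) :=
    Continuous.cfc_of_mem_nhdsSet _ Filter.univ_mem (by fun_prop)
      (fun ε => ha.isSelfAdjoint.add (IsSelfAdjoint.algebraMap A (.all ε)))
      (Real.continuous_rpow_const hp).continuousOn
  have h0 : cfc (· ^ p : ℝ → ℝ) (a + algebraMap ℝ A 0) = a ^ p := by
    simp [CFC.rpow_eq_cfc_real ha]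
  refine ((h0 ▸ hcont.tendsto 0).mono_left nhdsWithin_le_nhds).congr' ?_
  filter_upwards [self_mem_nhdsWithin] with ε hε
  rw [CFC.rpow_eq_cfc_real (add_nonneg ha (algebraMap_nonneg A (le_of_lt hε)))]

theorem sq_rpow {A : Type*} [CStarAlgebra A] [PartialOrder A] [StarOrderedRing A] {a : A}
    (ha : 0 ≤ a) {s : ℝ} (hs : 0 ≤ s) : (a ^ s) ^ 2 = a ^ (2 * s) := by
  rw [← CFC.rpow_natCast _ 2 CFC.rpow_nonneg,
    CFC.rpow_rpow_of_exponent_nonneg _ _ _ hs (by norm_num) ha, Nat.cast_ofNat, mul_comm]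

section InnerProductSpace

variable {E : Type*} [NormedAddCommGroup E] [InnerProductSpace ℂ E]

theorem re_inner_le_re_inner_of_le {S T : E →L[ℂ] E} (h : S ≤ T) (x : E) :
    re ⟪S x, x⟫_ℂ ≤ re ⟪T x, x⟫_ℂ := by
  simpa [inner_sub_left] using h.re_inner_nonneg_left x

variable {ι : Type*} {k : ι → E}

theorem norm_inner_le_bernorm (hk : ∀ lam, ‖k lam‖ = 1) (T : E →L[ℂ] E) (lam : ι) :
    ‖⟪T (k lam), k lam⟫_ℂ‖ ≤ bernorm k T := by
  refine le_ciSup (f := fun p : ι × ι => ‖⟪T (k p.1), k p.2⟫_ℂ‖) ⟨‖T‖, ?_⟩ (lam, lam)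
  rintro r ⟨p, rfl⟩
  simpa [hk] using (norm_inner_le_norm (𝕜 := ℂ) (T (k p.1)) (k p.2)).trans
    (mul_le_mul_of_nonneg_right (T.le_opNorm (k p.1)) (norm_nonneg _))

theorem re_inner_mul_re_inner_le_bernorm_mul (hk : ∀ lam, ‖k lam‖ = 1) (S T : E →L[ℂ] E)
    (lam : ι) :
    re ⟪S (k lam), k lam⟫_ℂ * re ⟪T (k lam), k lam⟫_ℂ ≤ bernorm k S * bernorm k T := by
  refine (le_abs_self _).trans ?_
  rw [abs_mul]
  exact mul_le_mul ((abs_re_le_norm _).trans (norm_inner_le_bernorm hk S lam))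
    ((abs_re_le_norm _).trans (norm_inner_le_bernorm hk T lam)) (abs_nonneg _)
    ((norm_nonneg _).trans (norm_inner_le_bernorm hk S lam))

theorem eta_pow_four_le [Nonempty ι] (T : E →L[ℂ] E) {N : ℝ}
    (h : ∀ lam, (‖⟪T (k lam), k lam⟫_ℂ‖ ^ 2 + ‖T (k lam)‖ ^ 4) ^ 2 ≤ N) : eta k T ^ 4 ≤ N := by
  have hN : 0 ≤ N := (sq_nonneg _).trans (h (Classical.arbitrary ι))
  have hle : eta k T ≤ √(√N) :=
    ciSup_le fun lam => Real.sqrt_le_sqrt (Real.le_sqrt_of_sq_le (h lam))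
  calc eta k T ^ 4 ≤ √(√N) ^ 4 :=
        pow_le_pow_left₀ (Real.iSup_nonneg fun _ => Real.sqrt_nonneg _) hle 4
    _ = N := by
        rw [show 4 = 2 * 2 from rfl, pow_mul, Real.sq_sqrt (Real.sqrt_nonneg _), Real.sq_sqrt hN]

end InnerProductSpace

theorem sq_re_inner_le_re_inner_sq {T : H →L[ℂ] H} (hT : IsSelfAdjoint T) (x : H) :
    re ⟪T x, x⟫_ℂ ^ 2 ≤ re ⟪(T ^ 2) x, x⟫_ℂ * ‖x‖ ^ 2 := by
  have hsq : re ⟪(T ^ 2) x, x⟫_ℂ = ‖T x‖ ^ 2 := by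
    rw [apply_norm_sq_eq_inner_adjoint_left, hT.adjoint_eq, sq]
    rfl
  rw [hsq, ← mul_pow, ← sq_abs]
  exact pow_le_pow_left₀ (abs_nonneg _) ((abs_re_le_norm _).trans (norm_inner_le_norm _ _)) 2

theorem norm_rpow_apply_sq_eq_re_inner {S : H →L[ℂ] H} (hS : IsStrictlyPositive S) (t : ℝ)
    (y : H) :
    ‖(S ^ t) y‖ ^ 2 = re ⟪(S ^ (2 * t)) y, y⟫_ℂ := by
  rw [apply_norm_sq_eq_inner_adjoint_left, CFC.rpow_nonneg.isSelfAdjoint.adjoint_eq, two_mul,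
    CFC.rpow_add hS.isUnit]
  rfl

theorem norm_apply_rpow_sq_le (A : H →L[ℂ] H) {ε : ℝ} (hε : 0 < ε) (t : ℝ) (x : H) :
    ‖A (((adjoint A * A + algebraMap ℝ (H →L[ℂ] H) ε) ^ t) x)‖ ^ 2 ≤
      re ⟪((adjoint A * A + algebraMap ℝ (H →L[ℂ] H) ε) ^ (2 * t + 1)) x, x⟫_ℂ := by
  set B := adjoint A * A + algebraMap ℝ (H →L[ℂ] H) ε
  have hB : IsStrictlyPositive B :=
    (isStrictlyPositive_algebraMap hε).nonneg_add (star_mul_self_nonneg A)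
  have hBt : IsSelfAdjoint (B ^ t) := CFC.rpow_nonneg.isSelfAdjoint
  have heq : B ^ t * B * B ^ t = B ^ (2 * t + 1) := by
    conv_lhs => enter [1, 2]; rw [← CFC.rpow_one B hB.nonneg]
    rw [← CFC.rpow_add hB.isUnit, ← CFC.rpow_add hB.isUnit]
    ring_nf
  have hle : B ^ t * (adjoint A * A) * B ^ t ≤ B ^ (2 * t + 1) :=
    heq ▸ hBt.conjugate_le_conjugate (le_add_of_nonneg_right (algebraMap_nonneg _ hε.le))
  have hconj : ⟪(B ^ t * (adjoint A * A) * B ^ t) x, x⟫_ℂ =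
      ⟪(adjoint A * A) ((B ^ t) x), (B ^ t) x⟫_ℂ :=
    hBt.isSymmetric _ x
  rw [apply_norm_sq_eq_inner_adjoint_left]
  exact hconj ▸ re_inner_le_re_inner_of_le hle x

theorem norm_inner_sq_le_re_inner_rpow_add_algebraMap (A : H →L[ℂ] H) {α ε : ℝ} (hα : α ≤ 1)
    (hε : 0 < ε) (x y : H) :
    ‖⟪A x, y⟫_ℂ‖ ^ 2 ≤
      re ⟪((adjoint A * A + algebraMap ℝ (H →L[ℂ] H) ε) ^ α) x, x⟫_ℂ *
        re ⟪((A * adjoint A + algebraMap ℝ (H →L[ℂ] H) ε) ^ (1 - α)) y, y⟫_ℂ := by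
  set B := adjoint A * A + algebraMap ℝ (H →L[ℂ] H) ε
  set C := A * adjoint A + algebraMap ℝ (H →L[ℂ] H) ε
  have hC : IsStrictlyPositive C :=
    (isStrictlyPositive_algebraMap hε).nonneg_add (mul_star_self_nonneg A)
  have hfactor : A = C ^ ((1 - α) / 2) * A * B ^ ((α - 1) / 2) := by
    have := eq_rpow_mul_mul_rpow_neg A hε (s := (1 - α) / 2) (by linarith)
    rwa [star_eq_adjoint, show -((1 - α) / 2) = (α - 1) / 2 by ring] at this
  have hinner : ⟪A x, y⟫_ℂ = ⟪A ((B ^ ((α - 1) / 2)) x), (C ^ ((1 - α) / 2)) y⟫_ℂ := by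
    have hψ : IsSelfAdjoint (C ^ ((1 - α) / 2)) := CFC.rpow_nonneg.isSelfAdjoint
    conv_lhs => rw [hfactor]
    exact hψ.isSymmetric _ y
  have h1 := norm_apply_rpow_sq_le A hε ((α - 1) / 2) x
  have h2 := norm_rpow_apply_sq_eq_re_inner hC ((1 - α) / 2) y
  rw [show 2 * ((α - 1) / 2) + 1 = α by ring] at h1
  rw [show 2 * ((1 - α) / 2) = 1 - α by ring] at h2
  calc ‖⟪A x, y⟫_ℂ‖ ^ 2 ≤ (‖A ((B ^ ((α - 1) / 2)) x)‖ * ‖(C ^ ((1 - α) / 2)) y‖) ^ 2 :=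
        hinner ▸ pow_le_pow_left₀ (norm_nonneg _) (norm_inner_le_norm _ _) 2
    _ = ‖A ((B ^ ((α - 1) / 2)) x)‖ ^ 2 * ‖(C ^ ((1 - α) / 2)) y‖ ^ 2 := mul_pow _ _ _
    _ ≤ _ := mul_le_mul h1 h2.le (sq_nonneg _) ((sq_nonneg _).trans h1)

theorem norm_inner_sq_le_re_inner_rpow (A : H →L[ℂ] H) {α : ℝ} (hα0 : 0 ≤ α) (hα1 : α ≤ 1)
    (x y : H) :
    ‖⟪A x, y⟫_ℂ‖ ^ 2 ≤
      re ⟪((adjoint A * A) ^ α) x, x⟫_ℂ * re ⟪((A * adjoint A) ^ (1 - α)) y, y⟫_ℂ := by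
  have hcont : ∀ z : H, Continuous fun T : H →L[ℂ] H => re ⟪T z, z⟫_ℂ := fun z => by fun_prop
  refine ge_of_tendsto
    ((((hcont x).tendsto _).comp (tendsto_rpow_add_algebraMap (star_mul_self_nonneg A) hα0)).mul
      (((hcont y).tendsto _).comp
        (tendsto_rpow_add_algebraMap (mul_star_self_nonneg A) (sub_nonneg.mpr hα1)))) ?_
  filter_upwards [self_mem_nhdsWithin] with ε hε using
    norm_inner_sq_le_re_inner_rpow_add_algebraMap A hα1 hε x y

theorem absop_rpow (A : H →L[ℂ] H) {s : ℝ} (hs : 0 ≤ s) :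
    absop A ^ s = (adjoint A * A) ^ (s / 2) := by
  have hA : 0 ≤ adjoint A * A := star_mul_self_nonneg A
  rw [absop, CFC.sqrt_eq_rpow, CFC.rpow_rpow_of_exponent_nonneg _ _ _ (by norm_num) hs hA]
  ring_nf

theorem absop_pow_four (A : H →L[ℂ] H) : absop A ^ 4 = (adjoint A * A) ^ 2 := by
  have hA : 0 ≤ adjoint A * A := star_mul_self_nonneg A
  rw [absop, show 4 = 2 * 2 from rfl, pow_mul, CFC.sq_sqrt _ hA]

theorem norm_inner_sq_add_norm_pow_four_sq_le (A : H →L[ℂ] H) {α : ℝ} (hα0 : 0 ≤ α)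
    (hα1 : α ≤ 1) {x : H} (hx : ‖x‖ = 1) :
    (‖⟪A x, x⟫_ℂ‖ ^ 2 + ‖A x‖ ^ 4) ^ 2 ≤
      re ⟪(CFC.rpow (absop A) (4 * α) + absop A ^ 4) x, x⟫_ℂ *
        re ⟪(CFC.rpow (absop (adjoint A)) (4 * (1 - α)) + absop A ^ 4) x, x⟫_ℂ := by
  simp only [CFC.rpow_eq_pow]
  rw [absop_rpow A (by positivity), absop_rpow (adjoint A) (by linarith), adjoint_adjoint,
    absop_pow_four, show 4 * α / 2 = 2 * α by ring, show 4 * (1 - α) / 2 = 2 * (1 - α) by ring,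
    add_apply, add_apply, inner_add_left, inner_add_left, map_add, map_add]
  set B := adjoint A * A
  set C := A * adjoint A
  have hB : 0 ≤ B := star_mul_self_nonneg A
  set a := re ⟪(B ^ α) x, x⟫_ℂ
  set b := re ⟪(C ^ (1 - α)) x, x⟫_ℂ
  set c := re ⟪B x, x⟫_ℂ
  have hkato : ‖⟪A x, x⟫_ℂ‖ ^ 2 ≤ a * b := norm_inner_sq_le_re_inner_rpow A hα0 hα1 x x
  have hc : ‖A x‖ ^ 2 = c := apply_norm_sq_eq_inner_adjoint_left A x
  have hsq : ∀ {T : H →L[ℂ] H}, IsSelfAdjoint T → re ⟪T x, x⟫_ℂ ^ 2 ≤ re ⟪(T ^ 2) x, x⟫_ℂ :=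
    fun hT => by simpa [hx] using sq_re_inner_le_re_inner_sq hT x
  have ha2 : a ^ 2 ≤ re ⟪(B ^ (2 * α)) x, x⟫_ℂ :=
    sq_rpow hB hα0 ▸ hsq CFC.rpow_nonneg.isSelfAdjoint
  have hb2 : b ^ 2 ≤ re ⟪(C ^ (2 * (1 - α))) x, x⟫_ℂ :=
    sq_rpow (mul_star_self_nonneg A) (sub_nonneg.mpr hα1) ▸ hsq CFC.rpow_nonneg.isSelfAdjoint
  have hc2 : c ^ 2 ≤ re ⟪(B ^ 2) x, x⟫_ℂ := hsq hB.isSelfAdjoint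
  calc (‖⟪A x, x⟫_ℂ‖ ^ 2 + ‖A x‖ ^ 4) ^ 2 ≤ (a * b + c ^ 2) ^ 2 := by
        rw [show ‖A x‖ ^ 4 = (‖A x‖ ^ 2) ^ 2 by ring, hc]
        gcongr
    _ ≤ (a ^ 2 + c ^ 2) * (b ^ 2 + c ^ 2) := by nlinarith [sq_nonneg ((a - b) * c)]
    _ ≤ _ := mul_le_mul (add_le_add ha2 hc2) (add_le_add hb2 hc2) (by positivity)
          ((by positivity : (0 : ℝ) ≤ a ^ 2 + c ^ 2).trans (add_le_add ha2 hc2))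

theorem stmt9 (k : Ω → H) (hk : ∀ lam, ‖k lam‖ = 1) (A : H →L[ℂ] H) :
    (∀ α ∈ Set.Icc (0 : ℝ) 1,
        (eta k A) ^ 4 ≤
          bernorm k (CFC.rpow (absop A) (4 * α) + (absop A) ^ 4) *
            bernorm k (CFC.rpow (absop (adjoint A)) (4 * (1 - α)) + (absop A) ^ 4)) ∧
      (eta k A) ^ 4 ≤
        ⨅ α : Set.Icc (0 : ℝ) 1,
          bernorm k (CFC.rpow (absop A) (4 * (α : ℝ)) + (absop A) ^ 4) *
            bernorm k (CFC.rpow (absop (adjoint A)) (4 * (1 - (α : ℝ))) + (absop A) ^ 4) := by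
  have key : ∀ α ∈ Set.Icc (0 : ℝ) 1,
      (eta k A) ^ 4 ≤
        bernorm k (CFC.rpow (absop A) (4 * α) + (absop A) ^ 4) *
          bernorm k (CFC.rpow (absop (adjoint A)) (4 * (1 - α)) + (absop A) ^ 4) :=
    fun α hα => eta_pow_four_le A fun lam =>
      (norm_inner_sq_add_norm_pow_four_sq_le A hα.1 hα.2 (hk lam)).trans
        (re_inner_mul_re_inner_le_bernorm_mul hk _ _ lam)
  have : Nonempty (Set.Icc (0 : ℝ) 1) := ⟨⟨0, by simp⟩⟩
  exact ⟨key, le_ciInf fun α => key α α.2⟩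
end

section
/- Let A be a bounded linear operator on H. Then for every α ∈ [0,1], η(A)² ≤ ‖ α|A|² + (1−α)|A*|² + |A|⁴ ‖_ber; consequently η(A)² ≤ min_{α∈[0,1]} ‖ α|A|² + (1−α)|A*|² + |A|⁴ ‖_ber. -/
open scoped InnerProductSpace
open ContinuousLinearMap

variable {H : Type*} [NormedAddCommGroup H] [InnerProductSpace ℂ H] [CompleteSpace H]
variable {Ω : Type*} [Nonempty Ω]

lemma sq_absop (A : H →L[ℂ] H) : absop A ^ 2 = adjoint A * A := by
  unfold absop
  exact CFC.sq_sqrt _ (by rw [← ContinuousLinearMap.star_eq_adjoint]; exact star_mul_self_nonneg A)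

lemma inner_B_eq (A : H →L[ℂ] H) (α : ℝ) (x : H) :
    ⟪((α : ℂ) • (absop A) ^ 2 + ((1 - α : ℝ) : ℂ) • (absop (adjoint A)) ^ 2 + (absop A) ^ 4) x, x⟫_ℂ
      = ((α * ‖A x‖^2 + (1-α) * ‖adjoint A x‖^2 + ‖(adjoint A * A) x‖^2 : ℝ) : ℂ) := by
  have h4 : (absop A) ^ 4 = (adjoint A * A) * (adjoint A * A) := by
    rw [show (4:ℕ) = 2*2 from rfl, pow_mul, sq_absop, sq]
  rw [sq_absop, sq_absop, h4]
  simp only [ContinuousLinearMap.add_apply, ContinuousLinearMap.smul_apply,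
    ContinuousLinearMap.mul_apply, inner_add_left, inner_smul_left,
    adjoint_inner_left, adjoint_inner_right]
  rw [← adjoint_inner_right A ((adjoint A) x) x,
    ← adjoint_inner_right A ((adjoint A) (A x)) (A x)]
  simp only [inner_self_eq_norm_sq_to_K, Complex.conj_ofReal]
  norm_cast
  push_cast
  ring_nf
  rfl

lemma bernorm_bddAbove (k : Ω → H) (hk : ∀ lam, ‖k lam‖ = 1) (B : H →L[ℂ] H) :
    BddAbove (Set.range fun p : Ω × Ω => ‖⟪B (k p.1), k p.2⟫_ℂ‖) := by
  refine ⟨‖B‖, ?_⟩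
  rintro _ ⟨p, rfl⟩
  calc ‖⟪B (k p.1), k p.2⟫_ℂ‖ ≤ ‖B (k p.1)‖ * ‖k p.2‖ := norm_inner_le_norm _ _
    _ = ‖B (k p.1)‖ := by rw [hk, mul_one]
    _ ≤ ‖B‖ * ‖k p.1‖ := B.le_opNorm _
    _ = ‖B‖ := by rw [hk, mul_one]

lemma diag_le_bernorm (k : Ω → H) (hk : ∀ lam, ‖k lam‖ = 1) (B : H →L[ℂ] H) (l : Ω) :
    ‖⟪B (k l), k l⟫_ℂ‖ ≤ bernorm k B :=
  le_ciSup (bernorm_bddAbove k hk B) (l, l)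

lemma key_ineq (k : Ω → H) (hk : ∀ lam, ‖k lam‖ = 1) (A : H →L[ℂ] H) (α : ℝ)
    (hα : α ∈ Set.Icc (0 : ℝ) 1) :
    (eta k A) ^ 2 ≤
      bernorm k ((α : ℂ) • (absop A) ^ 2 + ((1 - α : ℝ) : ℂ) • (absop (adjoint A)) ^ 2 +
        (absop A) ^ 4) := by
  set B := (α : ℂ) • (absop A) ^ 2 + ((1 - α : ℝ) : ℂ) • (absop (adjoint A)) ^ 2 + (absop A) ^ 4
    with hB
  have hBnn : 0 ≤ bernorm k B :=
    le_trans (norm_nonneg _) (diag_le_bernorm k hk B (Classical.arbitrary Ω))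
  have hpt : ∀ l : Ω, ‖⟪A (k l), k l⟫_ℂ‖ ^ 2 + ‖A (k l)‖ ^ 4 ≤ bernorm k B := by
    intro l
    set x := k l with hx
    have hx1 : ‖x‖ = 1 := hk l
    have hrep := inner_B_eq A α x
    set r : ℝ := α * ‖A x‖^2 + (1-α) * ‖adjoint A x‖^2 + ‖(adjoint A * A) x‖^2 with hr
    have h1 : ‖⟪A x, x⟫_ℂ‖ ≤ ‖A x‖ := by
      calc ‖⟪A x, x⟫_ℂ‖ ≤ ‖A x‖ * ‖x‖ := norm_inner_le_norm _ _
        _ = ‖A x‖ := by rw [hx1, mul_one]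
    have h2 : ‖⟪A x, x⟫_ℂ‖ ≤ ‖adjoint A x‖ := by
      rw [← adjoint_inner_right A x x]
      calc ‖⟪x, adjoint A x⟫_ℂ‖ ≤ ‖x‖ * ‖adjoint A x‖ := norm_inner_le_norm _ _
        _ = ‖adjoint A x‖ := by rw [hx1, one_mul]
    have h3 : ‖A x‖ ^ 2 ≤ ‖(adjoint A * A) x‖ := by
      have e1 : ⟪(adjoint A * A) x, x⟫_ℂ = ((‖A x‖ ^ 2 : ℝ) : ℂ) := by
        rw [ContinuousLinearMap.mul_apply, adjoint_inner_left, inner_self_eq_norm_sq_to_K]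
        norm_cast
      calc ‖A x‖ ^ 2 = ‖((‖A x‖ ^ 2 : ℝ) : ℂ)‖ := by
            rw [Complex.norm_real, Real.norm_of_nonneg (sq_nonneg _)]
        _ = ‖⟪(adjoint A * A) x, x⟫_ℂ‖ := by rw [e1]
        _ ≤ ‖(adjoint A * A) x‖ * ‖x‖ := norm_inner_le_norm _ _
        _ = ‖(adjoint A * A) x‖ := by rw [hx1, mul_one]
    have hle : ‖⟪A x, x⟫_ℂ‖ ^ 2 + ‖A x‖ ^ 4 ≤ r := by
      have hc1 : ‖⟪A x, x⟫_ℂ‖ ^ 2 ≤ ‖A x‖ ^ 2 := pow_le_pow_left₀ (norm_nonneg _) h1 2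
      have hc2 : ‖⟪A x, x⟫_ℂ‖ ^ 2 ≤ ‖adjoint A x‖ ^ 2 := pow_le_pow_left₀ (norm_nonneg _) h2 2
      have hc4 : ‖A x‖ ^ 4 ≤ ‖(adjoint A * A) x‖ ^ 2 := by
        have := pow_le_pow_left₀ (sq_nonneg ‖A x‖) h3 2
        calc ‖A x‖ ^ 4 = (‖A x‖ ^ 2) ^ 2 := by ring
          _ ≤ ‖(adjoint A * A) x‖ ^ 2 := this
      have h01 : 0 ≤ α := hα.1
      have h10 : 0 ≤ 1 - α := by linarith [hα.2]
      nlinarith [mul_le_mul_of_nonneg_left hc1 h01, mul_le_mul_of_nonneg_left hc2 h10]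
    have hrnorm : ‖⟪B x, x⟫_ℂ‖ = r := by
      have h10 : 0 ≤ 1 - α := by linarith [hα.2]
      rw [hrep, Complex.norm_real, Real.norm_of_nonneg
        (add_nonneg (add_nonneg (mul_nonneg hα.1 (sq_nonneg _))
          (mul_nonneg h10 (sq_nonneg _))) (sq_nonneg _))]
    calc ‖⟪A x, x⟫_ℂ‖ ^ 2 + ‖A x‖ ^ 4 ≤ r := hle
      _ = ‖⟪B x, x⟫_ℂ‖ := hrnorm.symm
      _ ≤ bernorm k B := diag_le_bernorm k hk B l
  have hetann : 0 ≤ eta k A := Real.iSup_nonneg fun _ => Real.sqrt_nonneg _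
  have hsup : eta k A ≤ Real.sqrt (bernorm k B) := by
    apply ciSup_le
    intro l
    exact Real.sqrt_le_sqrt (hpt l)
  calc (eta k A) ^ 2 ≤ Real.sqrt (bernorm k B) ^ 2 := pow_le_pow_left₀ hetann hsup 2
    _ = bernorm k B := Real.sq_sqrt hBnn

theorem stmt13 (k : Ω → H) (hk : ∀ lam, ‖k lam‖ = 1) (A : H →L[ℂ] H) :
    (∀ α ∈ Set.Icc (0 : ℝ) 1,
        (eta k A) ^ 2 ≤
          bernorm k ((α : ℂ) • (absop A) ^ 2 + ((1 - α : ℝ) : ℂ) • (absop (adjoint A)) ^ 2 +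
            (absop A) ^ 4)) ∧
      (eta k A) ^ 2 ≤
        ⨅ α : Set.Icc (0 : ℝ) 1,
          bernorm k (((α : ℝ) : ℂ) • (absop A) ^ 2 +
            ((1 - (α : ℝ) : ℝ) : ℂ) • (absop (adjoint A)) ^ 2 + (absop A) ^ 4) := by
  constructor
  · intro α hα
    exact key_ineq k hk A α hα
  · haveI : Nonempty (Set.Icc (0:ℝ) 1) := ⟨⟨0, by norm_num⟩⟩
    exact le_ciInf fun α => key_ineq k hk A (α : ℝ) α.2
end

section
/- Let A and B be bounded linear operators on H. Then η(A + B) ≤ η(A) + η(B) + ber(A*B + B*A). -/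
open scoped InnerProductSpace
open ContinuousLinearMap

variable {H : Type*} [NormedAddCommGroup H] [InnerProductSpace ℂ H] [CompleteSpace H]
variable {Ω : Type*} [Nonempty Ω]

/-! The Davis–Wielandt value of `T` at `x` is the Euclidean length of the point
`(|⟨T x, x⟩|, ‖T x‖²)`. Since `‖(A + B) x‖² = ‖A x‖² + ‖B x‖² + ⟨(A*B + B*A) x, x⟩`, the point of
`A + B` is dominated coordinatewise by the point of `A`, plus that of `B`, plus
`(0, |⟨(A*B + B*A) x, x⟩|)`, and the triangle inequality in `ℝ² ≅ ℂ` concludes at each `λ`. -/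

lemma sqrt_sq_add_sq_le_of_le_add {x y a b p q r : ℝ} (hx : 0 ≤ x) (hy : 0 ≤ y) (hr : 0 ≤ r)
    (hxab : x ≤ a + b) (hypqr : y ≤ p + q + r) :
    √(x ^ 2 + y ^ 2) ≤ √(a ^ 2 + p ^ 2) + √(b ^ 2 + q ^ 2) + r :=
  calc √(x ^ 2 + y ^ 2) ≤ √((a + b) ^ 2 + (p + q + r) ^ 2) := by gcongr
    _ = ‖(a + p * Complex.I) + (b + q * Complex.I) + r * Complex.I‖ := by
      rw [← Complex.norm_add_mul_I]; push_cast; ring_nf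
    _ ≤ ‖a + p * Complex.I‖ + ‖b + q * Complex.I‖ + ‖(r : ℂ) * Complex.I‖ := norm_add₃_le
    _ = √(a ^ 2 + p ^ 2) + √(b ^ 2 + q ^ 2) + r := by
      simp [Complex.norm_add_mul_I, abs_of_nonneg hr]

section InnerProductSpace

variable {𝕜 E : Type*} [RCLike 𝕜] [NormedAddCommGroup E] [InnerProductSpace 𝕜 E]

lemma norm_inner_apply_self_le_opNorm (T : E →L[𝕜] E) {x : E} (hx : ‖x‖ ≤ 1) :
    ‖⟪T x, x⟫_𝕜‖ ≤ ‖T‖ :=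
  calc ‖⟪T x, x⟫_𝕜‖ ≤ ‖T x‖ * ‖x‖ := norm_inner_le_norm _ _
    _ ≤ ‖T‖ * 1 := mul_le_mul (T.unit_le_opNorm x hx) hx (norm_nonneg _) (norm_nonneg _)
    _ = ‖T‖ := mul_one _

lemma bddAbove_range_norm_inner_apply_self {ι : Type*} (k : ι → E) (hk : ∀ i, ‖k i‖ ≤ 1)
    (T : E →L[𝕜] E) :
    BddAbove (Set.range fun i => ‖⟪T (k i), k i⟫_𝕜‖) :=
  ⟨‖T‖, Set.forall_mem_range.2 fun i => norm_inner_apply_self_le_opNorm T (hk i)⟩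

lemma bddAbove_range_sqrt_norm_inner_sq_add_norm_pow_four {ι : Type*} (k : ι → E)
    (hk : ∀ i, ‖k i‖ ≤ 1) (T : E →L[𝕜] E) :
    BddAbove (Set.range fun i => √(‖⟪T (k i), k i⟫_𝕜‖ ^ 2 + ‖T (k i)‖ ^ 4)) := by
  refine ⟨√(‖T‖ ^ 2 + ‖T‖ ^ 4), Set.forall_mem_range.2 fun i => ?_⟩
  have hinner := norm_inner_apply_self_le_opNorm T (hk i)
  have happly := T.unit_le_opNorm (k i) (hk i)
  gcongr

variable [CompleteSpace E]

lemma inner_adjoint_mul_add_adjoint_mul_apply_self (A B : E →L[𝕜] E) (x : E) :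
    ⟪(adjoint A * B + adjoint B * A) x, x⟫_𝕜 = ((2 * RCLike.re ⟪A x, B x⟫_𝕜 : ℝ) : 𝕜) := by
  rw [add_apply, inner_add_left, mul_apply_eq_comp, mul_apply_eq_comp, adjoint_inner_left,
    adjoint_inner_left, ← inner_conj_symm (B x) (A x), add_comm, RCLike.add_conj]
  push_cast
  ring

lemma norm_add_apply_sq_le (A B : E →L[𝕜] E) (x : E) :
    ‖(A + B) x‖ ^ 2 ≤ ‖A x‖ ^ 2 + ‖B x‖ ^ 2 + ‖⟪(adjoint A * B + adjoint B * A) x, x⟫_𝕜‖ := by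
  rw [add_apply, norm_add_sq (𝕜 := 𝕜), inner_adjoint_mul_add_adjoint_mul_apply_self,
    RCLike.norm_ofReal]
  linarith [le_abs_self (2 * RCLike.re ⟪A x, B x⟫_𝕜)]

lemma sqrt_norm_inner_sq_add_norm_pow_four_add_le (A B : E →L[𝕜] E) (x : E) :
    √(‖⟪(A + B) x, x⟫_𝕜‖ ^ 2 + ‖(A + B) x‖ ^ 4) ≤
      √(‖⟪A x, x⟫_𝕜‖ ^ 2 + ‖A x‖ ^ 4) + √(‖⟪B x, x⟫_𝕜‖ ^ 2 + ‖B x‖ ^ 4) +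
        ‖⟪(adjoint A * B + adjoint B * A) x, x⟫_𝕜‖ := by
  have hinner : ‖⟪(A + B) x, x⟫_𝕜‖ ≤ ‖⟪A x, x⟫_𝕜‖ + ‖⟪B x, x⟫_𝕜‖ := by
    rw [add_apply, inner_add_left]
    exact norm_add_le _ _
  simp only [show ∀ t : ℝ, t ^ 4 = (t ^ 2) ^ 2 from fun t => by ring]
  exact sqrt_sq_add_sq_le_of_le_add (norm_nonneg _) (by positivity) (norm_nonneg _) hinner
    (norm_add_apply_sq_le A B x)

end InnerProductSpace

theorem stmt19 (k : Ω → H) (hk : ∀ lam, ‖k lam‖ = 1) (A B : H →L[ℂ] H) :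
    eta k (A + B) ≤ eta k A + eta k B + ber k (adjoint A * B + adjoint B * A) := by
  have hk' : ∀ lam, ‖k lam‖ ≤ 1 := fun lam => (hk lam).le
  refine ciSup_le fun lam => ?_
  calc _ ≤ _ := sqrt_norm_inner_sq_add_norm_pow_four_add_le A B (k lam)
    _ ≤ eta k A + eta k B + ber k (adjoint A * B + adjoint B * A) := by
      gcongr
      · exact le_ciSup (bddAbove_range_sqrt_norm_inner_sq_add_norm_pow_four k hk' A) lam
      · exact le_ciSup (bddAbove_range_sqrt_norm_inner_sq_add_norm_pow_four k hk' B) lam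
      · exact le_ciSup (bddAbove_range_norm_inner_apply_self k hk' _) lam
end
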